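/- Let x ∈ E with h(x) = 0 and Dh(x) surjective, and suppose the Riemannian Hessian of f on M at x is positive definite: ⟨v, (∇²f(x) − Σ_{i=1}^m λ_i(x)∇²h_i(x))[v]⟩ > 0 for every nonzero v ∈ ker Dh(x). Then there exists β₀ ≥ 0 such that for every β ≥ β₀, the Hessian ∇²g_β(x) of Fletcher's augmented Lagrangian with penalty β is positive definite on all of E. -/

import Mathlib

open scoped RealInnerProductSpace ContDiff

noncomputable section

variable {E : Type*} [NormedAddCommGroup E] [InnerProductSpace ℝ E] [FiniteDimensional ℝ E] {m : ℕ}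

/-- The least-squares multipliers `λ(x) = (Dh(x) ∘ Dh(x)*)⁻¹ (Dh(x)[∇f(x)]) = (Dh(x)*)† ∇f(x)`.
(When `Dh(x)` is surjective, `Dh(x) ∘ Dh(x)*` is bijective and `Function.invFun` returns
its genuine inverse applied to `Dh(x)[∇f(x)]`.) -/
def lam (f : E → ℝ) (h : E → EuclideanSpace ℝ (Fin m)) (x : E) : EuclideanSpace ℝ (Fin m) :=
  Function.invFun
    (fun y => fderiv ℝ h x (ContinuousLinearMap.adjoint (fderiv ℝ h x) y))
    (fderiv ℝ h x (gradient f x))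

/-- Fletcher's augmented Lagrangian `g(x) = f(x) − ⟪λ(x), h(x)⟫ + β‖h(x)‖²`. -/
def flal (f : E → ℝ) (h : E → EuclideanSpace ℝ (Fin m)) (β : ℝ) (x : E) : ℝ :=
  f x - ⟪lam f h x, h x⟫ + β * ‖h x‖ ^ 2

/-- The smallest singular value `σ_min(A) = min_{‖y‖=1} ‖A*[y]‖` of a linear map. -/
def sigmaMin (A : E →L[ℝ] EuclideanSpace ℝ (Fin m)) : ℝ :=
  sInf ((fun y => ‖ContinuousLinearMap.adjoint A y‖) '' {y : EuclideanSpace ℝ (Fin m) | ‖y‖ = 1})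

/-- `C_λ(x) = ‖Dλ(x)‖`, the operator norm of the derivative of the multipliers. -/
def Clam (f : E → ℝ) (h : E → EuclideanSpace ℝ (Fin m)) (x : E) : ℝ :=
  ‖fderiv ℝ (lam f h) x‖

/-- `β₁(x) = σ₁(Dh(x))·C_λ(x) / (2σ_min(Dh(x))²)`. -/
def beta1 (f : E → ℝ) (h : E → EuclideanSpace ℝ (Fin m)) (x : E) : ℝ :=
  ‖fderiv ℝ h x‖ * Clam f h x / (2 * sigmaMin (fderiv ℝ h x) ^ 2)

/-- `β₂(x) = C_λ(x)/σ_min(Dh(x))`. -/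
def beta2 (f : E → ℝ) (h : E → EuclideanSpace ℝ (Fin m)) (x : E) : ℝ :=
  Clam f h x / sigmaMin (fderiv ℝ h x)

/-- `β₃(x) = 1/σ_min(Dh(x))`. -/
def beta3 (h : E → EuclideanSpace ℝ (Fin m)) (x : E) : ℝ :=
  1 / sigmaMin (fderiv ℝ h x)

/-!
Near `x` the multipliers are `λ = (Dh Dh*)⁻¹ Dh ∇f`, a smooth expression because `Dh(x) Dh(x)*`
is invertible and the units of an operator algebra form an open set. Since `h(x) = 0`,
differentiating `g_β` twice along lines through `x` kills every term containing `h(x)`: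
`∇²g_β(x)[v,v] = ∇²g_0(x)[v,v] + 2β‖Dh(x)v‖²`, and on `ker Dh(x)` the form `∇²g_0(x)` is the
Riemannian Hessian. Positivity for large `β` is then Finsler's lemma: the open sets
`{v | 0 < ∇²g_0(x)[v,v] + n‖Dh(x)v‖²}` increase with `n` and cover the unit sphere, so by
compactness one of them contains it.
-/

open ContinuousLinearMap Filter Topology

section InnerProductSpace

variable {E F : Type*} [NormedAddCommGroup E] [InnerProductSpace ℝ E] [CompleteSpace E]
  [NormedAddCommGroup F] [InnerProductSpace ℝ F] [CompleteSpace F]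

theorem contDiff_adjoint {n : WithTop ℕ∞} : ContDiff ℝ n fun T : E →L[ℝ] F => adjoint T :=
  let adjointCLM : (E →L[ℝ] F) →L[ℝ] F →L[ℝ] E :=
    LinearMap.mkContinuous
      { toFun := adjoint, map_add' := map_add adjoint, map_smul' := fun c T => by simp } 1
      (fun T => by simp)
  adjointCLM.contDiff

theorem ContDiff.gradient {f : E → ℝ} {m n : WithTop ℕ∞} (hf : ContDiff ℝ n f) (hmn : m + 1 ≤ n) :
    ContDiff ℝ m (gradient f) :=
  let dualCLM : StrongDual ℝ E →L[ℝ] E :=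
    LinearMap.mkContinuous
      { toFun := (InnerProductSpace.toDual ℝ E).symm, map_add' := map_add _,
        map_smul' := fun c φ => by simp } 1
      (fun φ => by simp)
  dualCLM.contDiff.comp (hf.fderiv_right hmn)

theorem isUnit_comp_adjoint_of_surjective [FiniteDimensional ℝ F] {T : E →L[ℝ] F}
    (hT : Function.Surjective T) :
    IsUnit (T ∘L adjoint T) := by
  have hker : (T ∘L adjoint T).ker = ⊥ := by
    rw [ker_self_comp_adjoint, ← orthogonal_range, LinearMap.range_eq_top.mpr hT,
      Submodule.top_orthogonal_eq_bot]
  have hinj : Function.Injective (T ∘L adjoint T) := LinearMap.ker_eq_bot.mp hker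
  exact isUnit_iff_bijective.mpr
    ⟨hinj, LinearMap.injective_iff_surjective (f := (T ∘L adjoint T : F →ₗ[ℝ] F)).mp hinj⟩

end InnerProductSpace

theorem ContinuousLinearMap.invFun_eq_ringInverse {R M : Type*} [Semiring R] [TopologicalSpace M]
    [AddCommMonoid M] [Module R M] {T : M →L[R] M} (hT : IsUnit T) (b : M) :
    Function.invFun T b = Ring.inverse T b := by
  obtain ⟨u, rfl⟩ := hT
  have hright : ∀ a, (u : M →L[R] M) ((↑u⁻¹ : M →L[R] M) a) = a :=
    DFunLike.congr_fun u.mul_inv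
  have hleft : Function.LeftInverse (↑u⁻¹ : M →L[R] M) (u : M →L[R] M) :=
    DFunLike.congr_fun u.inv_mul
  rw [Ring.inverse_unit]
  exact hleft.injective ((Function.invFun_eq ⟨_, hright b⟩).trans (hright b).symm)

theorem contDiffAt_lam {f : E → ℝ} {h : E → EuclideanSpace ℝ (Fin m)} {n : WithTop ℕ∞} {x : E}
    (hf : ContDiff ℝ (n + 1) f) (hh : ContDiff ℝ (n + 1) h)
    (hx : Function.Surjective (fderiv ℝ h x)) : ContDiffAt ℝ n (lam f h) x := by
  set A : E → EuclideanSpace ℝ (Fin m) →L[ℝ] EuclideanSpace ℝ (Fin m) :=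
    fun y => fderiv ℝ h y ∘L adjoint (fderiv ℝ h y)
  have hDh : ContDiff ℝ n (fderiv ℝ h) := hh.fderiv_right le_rfl
  have hA : ContDiff ℝ n A := hDh.clm_comp (contDiff_adjoint.comp hDh)
  have hAx : IsUnit (A x) := isUnit_comp_adjoint_of_surjective hx
  have hlam_eq :
      (fun y => Ring.inverse (A y) (fderiv ℝ h y (gradient f y))) =ᶠ[𝓝 x] lam f h := by
    filter_upwards [(Units.isOpen.preimage hA.continuous).mem_nhds hAx] with y hy
    exact (invFun_eq_ringInverse hy _).symm
  have hinv : ContDiffAt ℝ n Ring.inverse (A x) := hAx.unit_spec ▸ contDiffAt_ringInverse ℝ hAx.unit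
  exact ((hinv.comp x hA.contDiffAt).clm_apply
    (hDh.clm_apply (hf.gradient le_rfl)).contDiffAt).congr_of_eventuallyEq hlam_eq.symm

section SecondDerivative

variable {E F : Type*} [NormedAddCommGroup E] [NormedSpace ℝ E]

theorem DifferentiableAt.hasDerivAt_comp_line [NormedAddCommGroup F] [NormedSpace ℝ F] {G : E → F}
    {x : E} (hG : DifferentiableAt ℝ G x) (v : E) :
    HasDerivAt (fun t : ℝ => G (x + t • v)) (fderiv ℝ G x v) 0 := by
  have hline : HasDerivAt (fun t : ℝ => x + t • v) v 0 := by
    simpa using ((hasDerivAt_id (0 : ℝ)).smul_const v).const_add x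
  exact hG.hasFDerivAt.comp_hasDerivAt_of_eq 0 hline (by simp)

theorem ContDiffAt.hasDerivAt_fderiv_apply_line [NormedAddCommGroup F] [NormedSpace ℝ F]
    {G : E → F} {x : E} (hG : ContDiffAt ℝ 2 G x) (v : E) :
    HasDerivAt (fun t : ℝ => fderiv ℝ G (x + t • v) v) (iteratedFDeriv ℝ 2 G x ![v, v]) 0 := by
  have hDG : DifferentiableAt ℝ (fderiv ℝ G) x :=
    (hG.fderiv_right (m := 1) le_rfl).differentiableAt one_ne_zero
  rw [iteratedFDeriv_two_apply]
  exact (apply ℝ F v).hasFDerivAt.comp_hasDerivAt 0 (hDG.hasDerivAt_comp_line v)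

theorem iteratedFDeriv_two_inner_apply [NormedAddCommGroup F] [InnerProductSpace ℝ F]
    {a b : E → F} {x : E} (ha : ContDiffAt ℝ 2 a x) (hb : ContDiffAt ℝ 2 b x) (v : E) :
    iteratedFDeriv ℝ 2 (fun y => ⟪a y, b y⟫) x ![v, v] =
      ⟪iteratedFDeriv ℝ 2 a x ![v, v], b x⟫ + 2 * ⟪fderiv ℝ a x v, fderiv ℝ b x v⟫ +
        ⟪a x, iteratedFDeriv ℝ 2 b x ![v, v]⟫ := by
  have hline : Tendsto (fun t : ℝ => x + t • v) (𝓝 0) (𝓝 x) :=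
    (by fun_prop : Continuous fun t : ℝ => x + t • v).tendsto' 0 x (by simp)
  have hsmooth : ∀ᶠ t in 𝓝 (0 : ℝ),
      ContDiffAt ℝ 2 a (x + t • v) ∧ ContDiffAt ℝ 2 b (x + t • v) :=
    hline.eventually ((ha.eventually (by simp)).and (hb.eventually (by simp)))
  have hderiv : (fun t : ℝ => ⟪fderiv ℝ a (x + t • v) v, b (x + t • v)⟫ +
        ⟪a (x + t • v), fderiv ℝ b (x + t • v) v⟫) =ᶠ[𝓝 0]
      fun t => fderiv ℝ (fun y => ⟪a y, b y⟫) (x + t • v) v := by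
    filter_upwards [hsmooth] with t ⟨hat, hbt⟩
    rw [fderiv_inner_apply ℝ (hat.differentiableAt two_ne_zero) (hbt.differentiableAt two_ne_zero),
      add_comm]
  have hsecond := ((ha.hasDerivAt_fderiv_apply_line v).inner ℝ
      ((hb.differentiableAt two_ne_zero).hasDerivAt_comp_line v)).add
    (((ha.differentiableAt two_ne_zero).hasDerivAt_comp_line v).inner ℝ
      (hb.hasDerivAt_fderiv_apply_line v))
  rw [((ha.inner ℝ hb).hasDerivAt_fderiv_apply_line v).unique
    (hsecond.congr_of_eventuallyEq hderiv.symm)]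
  simp only [zero_smul, add_zero]
  ring

theorem inner_iteratedFDeriv_apply_eq_sum {ι : Type*} [Fintype ι] {h : E → EuclideanSpace ℝ ι}
    {x : E} {k : ℕ} (hh : ContDiffAt ℝ k h x) (c : EuclideanSpace ℝ ι) (w : Fin k → E) :
    ⟪c, iteratedFDeriv ℝ k h x w⟫ = ∑ i, c i * iteratedFDeriv ℝ k (fun y => h y i) x w := by
  rw [PiLp.inner_apply]
  refine Finset.sum_congr rfl fun i _ => ?_
  have hcomp : (fun y => h y i) = EuclideanSpace.proj i ∘ h := rfl
  rw [hcomp, (EuclideanSpace.proj i).iteratedFDeriv_comp_left hh le_rfl]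
  simp [mul_comm]

end SecondDerivative

theorem iteratedFDeriv_two_flal_apply {f : E → ℝ} {h : E → EuclideanSpace ℝ (Fin m)} {x : E}
    (hf : ContDiffAt ℝ 2 f x) (hh : ContDiffAt ℝ 2 h x) (hlam : ContDiffAt ℝ 2 (lam f h) x)
    (hx : h x = 0) (β : ℝ) (v : E) :
    iteratedFDeriv ℝ 2 (flal f h β) x ![v, v] =
      iteratedFDeriv ℝ 2 f x ![v, v] - ⟪lam f h x, iteratedFDeriv ℝ 2 h x ![v, v]⟫
        - 2 * ⟪fderiv ℝ (lam f h) x v, fderiv ℝ h x v⟫ + 2 * β * ‖fderiv ℝ h x v‖ ^ 2 := by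
  have hflal : flal f h β = fun y => f y - ⟪lam f h y, h y⟫ + β • ⟪h y, h y⟫ := by
    funext y
    rw [flal, real_inner_self_eq_norm_sq, smul_eq_mul]
  rw [hflal,
    fun_iteratedFDeriv_add_apply (hf.sub (hlam.inner ℝ hh)) ((hh.inner ℝ hh).const_smul β),
    fun_iteratedFDeriv_sub_apply hf (hlam.inner ℝ hh),
    iteratedFDeriv_const_smul_apply' (hh.inner ℝ hh)]
  simp only [add_apply, sub_apply, smul_apply]
  rw [iteratedFDeriv_two_inner_apply hlam hh, iteratedFDeriv_two_inner_apply hh hh, hx]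
  simp only [inner_zero_left, inner_zero_right, real_inner_self_eq_norm_sq, smul_eq_mul]
  ring

theorem ContinuousMultilinearMap.apply_vec_two_smul {R E G : Type*} [CommSemiring R]
    [AddCommMonoid E] [Module R E] [TopologicalSpace E] [AddCommMonoid G] [Module R G]
    [TopologicalSpace G] (M : ContinuousMultilinearMap R (fun _ : Fin 2 => E) G) (c : R) (u : E) :
    M ![c • u, c • u] = c ^ 2 • M ![u, u] := by
  have hvec : ![c • u, c • u] = fun i => c • ![u, u] i := by
    ext i
    fin_cases i <;> rfl
  rw [hvec, M.map_smul_univ, Fin.prod_univ_two, sq]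

theorem exists_forall_pos_add_mul_norm_sq_of_pos_on_ker {E F : Type*} [NormedAddCommGroup E]
    [NormedSpace ℝ E] [FiniteDimensional ℝ E] [NormedAddCommGroup F] [NormedSpace ℝ F]
    (M : ContinuousMultilinearMap ℝ (fun _ : Fin 2 => E) ℝ) (A : E →L[ℝ] F)
    (hM : ∀ v, A v = 0 → v ≠ 0 → 0 < M ![v, v]) :
    ∃ β₀ : ℝ, 0 ≤ β₀ ∧ ∀ β, β₀ ≤ β → ∀ v, v ≠ 0 → 0 < M ![v, v] + β * ‖A v‖ ^ 2 := by
  set U : ℕ → Set E := fun n => {v | 0 < M ![v, v] + n * ‖A v‖ ^ 2}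
  have hU_open : ∀ n, IsOpen (U n) := fun n => isOpen_lt continuous_const (by fun_prop)
  have hU_mono : Monotone U := fun n n' hnn' v hv => by
    simp only [U, Set.mem_ofPred_eq] at hv ⊢
    nlinarith [sq_nonneg ‖A v‖, (Nat.cast_le (α := ℝ)).mpr hnn']
  have hcover : Metric.sphere (0 : E) 1 ⊆ ⋃ n, U n := by
    intro v hv
    have hv0 : v ≠ 0 := ne_zero_of_mem_unit_sphere ⟨v, hv⟩
    by_cases hAv : A v = 0
    · exact Set.mem_iUnion.mpr ⟨0, by simpa [U] using hM v hAv hv0⟩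
    · have hpos : 0 < ‖A v‖ ^ 2 := by positivity
      obtain ⟨n, hn⟩ := exists_nat_gt (-M ![v, v] / ‖A v‖ ^ 2)
      refine Set.mem_iUnion.mpr ⟨n, ?_⟩
      simp only [U, Set.mem_ofPred_eq]
      rw [div_lt_iff₀ hpos] at hn
      linarith
  obtain ⟨n, hn⟩ := (isCompact_sphere (0 : E) 1).elim_directed_cover U hU_open hcover
    hU_mono.directed_le
  refine ⟨n, n.cast_nonneg, fun β hβ v hv => ?_⟩
  have hv' : 0 < ‖v‖ := norm_pos_iff.mpr hv
  set u := ‖v‖⁻¹ • v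
  have hu : 0 < M ![u, u] + n * ‖A u‖ ^ 2 := hn (by simp [u, norm_smul, hv'.ne'])
  have hvu : v = ‖v‖ • u := by simp [u, hv'.ne']
  rw [hvu, M.apply_vec_two_smul, map_smul, norm_smul, smul_eq_mul, Real.norm_of_nonneg hv'.le]
  nlinarith [mul_le_mul_of_nonneg_right hβ (sq_nonneg ‖A u‖), pow_pos hv' 2]

/-- (Fletcher) If `x ∈ M` and the Riemannian Hessian of `f` on `M` at `x` is positive
definite on `ker Dh(x)`, then for every large enough penalty `β`, the Hessian of Fletcher's
augmented Lagrangian at `x` is positive definite on all of `E`. -/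
theorem fletcher_hessian_positive_definite_for_large_beta
    (f : E → ℝ) (h : E → EuclideanSpace ℝ (Fin m))
    (hf : ContDiff ℝ ∞ f) (hh : ContDiff ℝ ∞ h)
    (x : E) (hfeas : h x = 0) (hsurj : Function.Surjective (fderiv ℝ h x))
    (hpos : ∀ v ∈ LinearMap.ker (fderiv ℝ h x : E →ₗ[ℝ] EuclideanSpace ℝ (Fin m)), v ≠ 0 →
      iteratedFDeriv ℝ 2 f x ![v, v]
        - ∑ i, lam f h x i * iteratedFDeriv ℝ 2 (fun y => h y i) x ![v, v] > 0) :
    ∃ β₀ : ℝ, 0 ≤ β₀ ∧ ∀ β : ℝ, β₀ ≤ β →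
      ∀ v : E, v ≠ 0 → iteratedFDeriv ℝ 2 (flal f h β) x ![v, v] > 0 := by
  have hf2 : ContDiffAt ℝ 2 f x := hf.contDiffAt.of_le (by decide)
  have hh2 : ContDiffAt ℝ 2 h x := hh.contDiffAt.of_le (by decide)
  have hlam : ContDiffAt ℝ 2 (lam f h) x :=
    contDiffAt_lam (hf.of_le (by decide)) (hh.of_le (by decide)) hsurj
  have hhess := iteratedFDeriv_two_flal_apply hf2 hh2 hlam hfeas
  obtain ⟨β₁, hβ₁, hpen⟩ := exists_forall_pos_add_mul_norm_sq_of_pos_on_ker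
    (iteratedFDeriv ℝ 2 (flal f h 0) x) (fderiv ℝ h x) fun v hv hv0 => by
      have hRiem := hpos v (LinearMap.mem_ker.mpr hv) hv0
      rw [← inner_iteratedFDeriv_apply_eq_sum hh2] at hRiem
      simpa [hhess, hv] using hRiem
  refine ⟨β₁ / 2, by positivity, fun β hβ v hv => ?_⟩
  have hpen_v := hpen (2 * β) (by linarith) v hv
  rw [hhess] at hpen_v ⊢
  linarith
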